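/- Projections under the Rényi divergence: Let α > 1 and L ∈ ℒ⁺. Then the map ℒ(π) ∋ M ↦ R_α(M||L) attains a unique minimum at the power mean reversiblization P_{1−α}(L), and the map ℒ⁺(π) ∋ M ↦ R_α(L||M) attains a unique minimum at the power mean reversiblization P_α(L). -/

import Mathlib

open Finset

noncomputable section

variable {X : Type*} [Fintype X] [DecidableEq X]

/-- Build a matrix with prescribed off-diagonal entries and diagonal entries
chosen so that every row sums to zero. -/
def rowZero (F : X → X → ℝ) : X → X → ℝ :=
  fun x y => if x = y then -(∑ z ∈ Finset.univ.erase x, F x z) else F x y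

/-- `L` is a Markov infinitesimal generator: nonnegative off-diagonal entries
and zero row sums. -/
def IsGen (L : X → X → ℝ) : Prop :=
  (∀ x y, x ≠ y → 0 ≤ L x y) ∧ (∀ x, ∑ y, L x y = 0)

/-- `L` is a `π`-reversible Markov generator, i.e. `L ∈ ℒ(π)`. -/
def IsRev (π : X → ℝ) (L : X → X → ℝ) : Prop :=
  IsGen L ∧ ∀ x y, π x * L x y = π y * L y x

/-- `π` is a probability distribution with full support. -/
def IsProb (π : X → ℝ) : Prop := (∀ x, 0 < π x) ∧ ∑ x, π x = 1

/-- The `π`-dual `L_π` of `L`: off-diagonal entries `π(y)L(y,x)/π(x)`,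
diagonal entries make row sums zero. -/
def dual (π : X → ℝ) (L : X → X → ℝ) : X → X → ℝ :=
  rowZero (fun x y => π y * L y x / π x)

/-- The `f`-divergence between generators: `Df f π M L = D_f(M‖L)`.
(The convention `0·f(a/0) = 0` holds automatically since `a/0 = 0` and
the factor `L x y = 0` kills the term.) -/
def Df (f : ℝ → ℝ) (π : X → ℝ) (M L : X → X → ℝ) : ℝ :=
  ∑ x, π x * ∑ y ∈ Finset.univ.erase x, L x y * f (M x y / L x y)

/-- Generator of the `α`-divergence: `f_α(t) = (t^α − αt − (1−α))/(α(α−1))`. -/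
def falpha (α : ℝ) : ℝ → ℝ :=
  fun t => (t ^ α - α * t - (1 - α)) / (α * (α - 1))

/-- The power mean reversiblization `P_p(L)`: off-diagonal entries
`((L(x,y)^p + L_π(x,y)^p)/2)^{1/p}` (set to `0` when `p < 0` and
`L(x,y)·L_π(x,y) = 0`), diagonal entries make row sums zero. -/
def pmean (p : ℝ) (π : X → ℝ) (L : X → X → ℝ) : X → X → ℝ :=
  rowZero (fun x y =>
    if p < 0 ∧ L x y * dual π L x y = 0 then 0
    else ((L x y ^ p + dual π L x y ^ p) / 2) ^ (1 / p))

/-- The Rényi divergence `R_α(M‖L) = (1/(α−1))·ln(1 + α(α−1)·D_α(M‖L))`. -/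
def Renyi (α : ℝ) (π : X → ℝ) (M L : X → X → ℝ) : ℝ :=
  (1 / (α - 1)) * Real.log (1 + α * (α - 1) * Df (falpha α) π M L)

-- ### rowZero lemmas

lemma rowZero_off {F : X → X → ℝ} {x y : X} (h : x ≠ y) : rowZero F x y = F x y := if_neg h

lemma rowZero_rowsum (F : X → X → ℝ) (x : X) : ∑ y, rowZero F x y = 0 := by
  rw [← Finset.add_sum_erase Finset.univ _ (Finset.mem_univ x)]
  have h1 : rowZero F x x = -(∑ z ∈ Finset.univ.erase x, F x z) := if_pos rfl
  have h2 : ∑ y ∈ Finset.univ.erase x, rowZero F x y = ∑ y ∈ Finset.univ.erase x, F x y :=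
    Finset.sum_congr rfl fun y hy => rowZero_off ((Finset.mem_erase.1 hy).1).symm
  rw [h1, h2]; ring

lemma gen_diag {M : X → X → ℝ} (h : ∀ x, ∑ y, M x y = 0) (x : X) :
    M x x = -(∑ y ∈ Finset.univ.erase x, M x y) := by
  have hx := h x
  rw [← Finset.add_sum_erase Finset.univ _ (Finset.mem_univ x)] at hx
  linarith

-- ### dual lemmas

lemma dual_off {π : X → ℝ} {L : X → X → ℝ} {x y : X} (h : x ≠ y) :
    dual π L x y = π y * L y x / π x := rowZero_off h

lemma dual_pos {π : X → ℝ} (hπ : ∀ x, 0 < π x) {L : X → X → ℝ}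
    (hLpos : ∀ x y, x ≠ y → 0 < L x y) {x y : X} (h : x ≠ y) :
    0 < dual π L x y := by
  rw [dual_off h]
  exact div_pos (mul_pos (hπ y) (hLpos y x h.symm)) (hπ x)

-- ### pmean lemmas

lemma pmean_off {p : ℝ} {π : X → ℝ} {L : X → X → ℝ} {x y : X} (h : x ≠ y)
    (hL : 0 < L x y) (hd : 0 < dual π L x y) :
    pmean p π L x y = ((L x y ^ p + dual π L x y ^ p) / 2) ^ (1 / p) := by
  unfold pmean
  rw [rowZero_off h, if_neg]
  rintro ⟨-, h0⟩
  exact (mul_pos hL hd).ne' h0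

lemma pmean_off_pos {p : ℝ} {π : X → ℝ} (hπ : ∀ x, 0 < π x) {L : X → X → ℝ}
    (hLpos : ∀ x y, x ≠ y → 0 < L x y) {x y : X} (h : x ≠ y) :
    0 < pmean p π L x y := by
  rw [pmean_off h (hLpos x y h) (dual_pos hπ hLpos h)]
  have h1 : (0:ℝ) < (L x y ^ p + dual π L x y ^ p) / 2 := by
    have := Real.rpow_pos_of_pos (hLpos x y h) p
    have := Real.rpow_pos_of_pos (dual_pos hπ hLpos h) p
    linarith
  exact Real.rpow_pos_of_pos h1 _

lemma mul_rpow_inv {p c t : ℝ} (hp : p ≠ 0) (hc : 0 < c) (ht : 0 ≤ t) :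
    c * t ^ (1 / p) = (c ^ p * t) ^ (1 / p) := by
  rw [Real.mul_rpow (Real.rpow_nonneg hc.le p) ht, ← Real.rpow_mul hc.le]
  have h : p * (1 / p) = 1 := by field_simp
  rw [h, Real.rpow_one]

lemma pmean_rev {π : X → ℝ} (hπ : ∀ x, 0 < π x) {L : X → X → ℝ}
    (hLpos : ∀ x y, x ≠ y → 0 < L x y) {p : ℝ} (hp : p ≠ 0) :
    IsRev π (pmean p π L) := by
  refine ⟨⟨fun x y hxy => (pmean_off_pos hπ hLpos hxy).le, fun x => rowZero_rowsum _ x⟩, ?_⟩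
  intro x y
  rcases eq_or_ne x y with rfl | hxy
  · rfl
  · rw [pmean_off hxy (hLpos x y hxy) (dual_pos hπ hLpos hxy),
      pmean_off hxy.symm (hLpos y x hxy.symm) (dual_pos hπ hLpos hxy.symm)]
    have hbase1 : (0:ℝ) ≤ (L x y ^ p + dual π L x y ^ p) / 2 := by
      have := Real.rpow_pos_of_pos (hLpos x y hxy) p
      have := Real.rpow_pos_of_pos (dual_pos hπ hLpos hxy) p
      linarith
    have hbase2 : (0:ℝ) ≤ (L y x ^ p + dual π L y x ^ p) / 2 := by
      have := Real.rpow_pos_of_pos (hLpos y x hxy.symm) p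
      have := Real.rpow_pos_of_pos (dual_pos hπ hLpos hxy.symm) p
      linarith
    rw [mul_rpow_inv hp (hπ x) hbase1, mul_rpow_inv hp (hπ y) hbase2]
    congr 1
    have hpx : (0:ℝ) < π x ^ p := Real.rpow_pos_of_pos (hπ x) p
    have hpy : (0:ℝ) < π y ^ p := Real.rpow_pos_of_pos (hπ y) p
    have e1 : π x ^ p * ((L x y ^ p + dual π L x y ^ p) / 2)
        = ((π x * L x y) ^ p + (π y * L y x) ^ p) / 2 := by
      have hmul : (π x * L x y) ^ p = π x ^ p * L x y ^ p :=
        Real.mul_rpow (hπ x).le (hLpos x y hxy).le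
      rw [dual_off hxy, Real.div_rpow (mul_pos (hπ y) (hLpos y x hxy.symm)).le (hπ x).le, hmul]
      field_simp
    have e2 : π y ^ p * ((L y x ^ p + dual π L y x ^ p) / 2)
        = ((π y * L y x) ^ p + (π x * L x y) ^ p) / 2 := by
      have hmul : (π y * L y x) ^ p = π y ^ p * L y x ^ p :=
        Real.mul_rpow (hπ y).le (hLpos y x hxy.symm).le
      rw [dual_off hxy.symm, Real.div_rpow (mul_pos (hπ x) (hLpos x y hxy)).le (hπ y).le, hmul]
      field_simp
    rw [e1, e2, add_comm]

-- ### off-diagonal double sums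

def oS (G : X → X → ℝ) : ℝ := ∑ x, ∑ y ∈ Finset.univ.erase x, G x y

lemma oS_congr {G H : X → X → ℝ} (h : ∀ x y, x ≠ y → G x y = H x y) : oS G = oS H :=
  Finset.sum_congr rfl fun x _ => Finset.sum_congr rfl fun y hy =>
    h x y ((Finset.mem_erase.1 hy).1).symm

lemma oS_swap (G : X → X → ℝ) : oS G = oS fun x y => G y x := by
  unfold oS
  exact Finset.sum_comm' fun x y => by
    simp only [Finset.mem_univ, Finset.mem_erase, and_true, true_and]
    exact ne_comm

lemma oS_add (G H : X → X → ℝ) : oS (fun x y => G x y + H x y) = oS G + oS H := by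
  unfold oS
  rw [← Finset.sum_add_distrib]
  exact Finset.sum_congr rfl fun x _ => Finset.sum_add_distrib

lemma Df_eq_oS (f : ℝ → ℝ) (π : X → ℝ) (M L : X → X → ℝ) :
    Df f π M L = oS (fun x y => π x * (L x y * f (M x y / L x y))) :=
  Finset.sum_congr rfl fun x _ => Finset.mul_sum _ _ _

-- ### symmetrization

lemma sym1 {π : X → ℝ} (hπ : ∀ x, 0 < π x) {L : X → X → ℝ}
    (hLpos : ∀ x y, x ≠ y → 0 < L x y) {M : X → X → ℝ}
    (hM : ∀ x y, π x * M x y = π y * M y x) (f : ℝ → ℝ) :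
    Df f π M L = oS (fun x y => π x * (dual π L x y * f (M x y / dual π L x y))) := by
  rw [Df_eq_oS, oS_swap (fun x y => π x * (dual π L x y * f (M x y / dual π L x y)))]
  refine oS_congr fun x y hxy => ?_
  have hd : π y * dual π L y x = π x * L x y := by
    rw [dual_off hxy.symm, mul_comm]
    exact div_mul_cancel₀ _ (hπ y).ne'
  have harg : M y x / dual π L y x = M x y / L x y := by
    have e1 : M y x / dual π L y x = (π y * M y x) / (π y * dual π L y x) :=
      (mul_div_mul_left _ _ (hπ y).ne').symm
    rw [e1, ← hM x y, hd, mul_div_mul_left _ _ (hπ x).ne']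
  rw [← mul_assoc, ← mul_assoc, harg, hd]

lemma sym2 {π : X → ℝ} (hπ : ∀ x, 0 < π x) {L : X → X → ℝ}
    (hLpos : ∀ x y, x ≠ y → 0 < L x y) {M : X → X → ℝ}
    (hM : ∀ x y, π x * M x y = π y * M y x) (f : ℝ → ℝ) :
    Df f π L M = oS (fun x y => π x * (M x y * f (dual π L x y / M x y))) := by
  rw [Df_eq_oS, oS_swap (fun x y => π x * (M x y * f (dual π L x y / M x y)))]
  refine oS_congr fun x y hxy => ?_
  have hd : π y * dual π L y x = π x * L x y := by
    rw [dual_off hxy.symm, mul_comm]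
    exact div_mul_cancel₀ _ (hπ y).ne'
  have hm : π y * M y x = π x * M x y := (hM x y).symm
  have harg : dual π L y x / M y x = L x y / M x y := by
    have e1 : dual π L y x / M y x = (π y * dual π L y x) / (π y * M y x) :=
      (mul_div_mul_left _ _ (hπ y).ne').symm
    rw [e1, hd, hm, mul_div_mul_left _ _ (hπ x).ne']
  rw [← mul_assoc, ← mul_assoc, harg, hm]


/-- Tangent line inequality for `t ↦ t^α`, `α > 1`, strict version. -/
lemma bern_pos_strict {α : ℝ} (hα : 1 < α) {s : ℝ} (hs : 0 < s) {m : ℝ} (hm : 0 ≤ m)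
    (hne : m ≠ s) : s ^ α + α * s ^ (α - 1) * (m - s) < m ^ α := by
  set u : ℝ := m / s - 1 with hu
  have h1 : -1 ≤ u := by
    have : 0 ≤ m / s := div_nonneg hm hs.le
    simp only [hu]; linarith
  have hu0 : u ≠ 0 := by
    simp only [hu, sub_ne_zero]
    intro h
    exact hne (by field_simp at h; linarith)
  have h2 := one_add_mul_self_lt_rpow_one_add h1 hu0 hα
  have h3 : 1 + u = m / s := by simp only [hu]; ring
  have hsα : 0 < s ^ α := Real.rpow_pos_of_pos hs α
  have h4 : s ^ α * (1 + α * u) < s ^ α * (1 + u) ^ α :=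
    mul_lt_mul_of_pos_left h2 hsα
  have h5 : s ^ α * (1 + u) ^ α = m ^ α := by
    rw [h3, ← Real.mul_rpow hs.le (div_nonneg hm hs.le), mul_div_cancel₀ _ hs.ne']
  have h6 : s ^ (α - 1) = s ^ α / s := by
    rw [Real.rpow_sub hs, Real.rpow_one]
  have h7 : s ^ α * (1 + α * u) = s ^ α + α * s ^ (α - 1) * (m - s) := by
    rw [h6]; simp only [hu]; field_simp
  linarith [h7 ▸ h4, h5 ▸ h4]

lemma bern_pos {α : ℝ} (hα : 1 < α) {s : ℝ} (hs : 0 < s) {m : ℝ} (hm : 0 ≤ m) :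
    s ^ α + α * s ^ (α - 1) * (m - s) ≤ m ^ α := by
  rcases eq_or_ne m s with rfl | hne
  · simp
  · exact (bern_pos_strict hα hs hm hne).le

/-- Tangent line inequality for `t ↦ t^q`, `q < 0`, on `(0,∞)`, strict version. -/
lemma bern_neg_strict {q : ℝ} (hq : q < 0) {s : ℝ} (hs : 0 < s) {m : ℝ} (hm : 0 < m)
    (hne : m ≠ s) : s ^ q + q * s ^ (q - 1) * (m - s) < m ^ q := by
  have hms : 0 < m / s := div_pos hm hs
  have hlog : Real.log (m / s) < m / s - 1 :=
    Real.log_lt_sub_one_of_pos hms (by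
      intro h; exact hne (by field_simp at h; linarith))
  have h2 : 1 + q * Real.log (m / s) ≤ (m / s) ^ q := by
    rw [Real.rpow_def_of_pos hms]
    linarith [Real.add_one_le_exp (Real.log (m / s) * q)]
  have h3 : q * (m / s - 1) < q * Real.log (m / s) := by
    exact (mul_lt_mul_left_of_neg hq).mpr hlog
  have h4 : 1 + q * (m / s - 1) < (m / s) ^ q := by linarith
  have hsq : 0 < s ^ q := Real.rpow_pos_of_pos hs q
  have h5 : s ^ q * (1 + q * (m / s - 1)) < s ^ q * (m / s) ^ q :=
    mul_lt_mul_of_pos_left h4 hsq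
  have h6 : s ^ q * (m / s) ^ q = m ^ q := by
    rw [← Real.mul_rpow hs.le hms.le, mul_div_cancel₀ _ hs.ne']
  have h7 : s ^ (q - 1) = s ^ q / s := by rw [Real.rpow_sub hs, Real.rpow_one]
  have h8 : s ^ q * (1 + q * (m / s - 1)) = s ^ q + q * s ^ (q - 1) * (m - s) := by
    rw [h7]; field_simp
  linarith [h8 ▸ h5, h6 ▸ h5]

lemma bern_neg {q : ℝ} (hq : q < 0) {s : ℝ} (hs : 0 < s) {m : ℝ} (hm : 0 < m) :
    s ^ q + q * s ^ (q - 1) * (m - s) ≤ m ^ q := by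
  rcases eq_or_ne m s with rfl | hne
  · simp
  · exact (bern_neg_strict hq hs hm hne).le


-- ### falpha algebra

lemma falpha_nonneg {α : ℝ} (hα : 1 < α) {t : ℝ} (ht : 0 ≤ t) : 0 ≤ falpha α t := by
  have h := bern_pos hα one_pos ht
  rw [Real.one_rpow, Real.one_rpow] at h
  unfold falpha
  apply div_nonneg _ (by nlinarith)
  nlinarith

lemma expand1 {α a m : ℝ} (hα : 1 < α) (ha : 0 < a) (hm : 0 ≤ m) :
    a * falpha α (m / a) = (a ^ (1 - α) * m ^ α - α * m - (1 - α) * a) / (α * (α - 1)) := by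
  unfold falpha
  have h1 : (m / a) ^ α = m ^ α / a ^ α := Real.div_rpow hm ha.le α
  have h2 : a ^ (1 - α) = a / a ^ α := by rw [Real.rpow_sub ha, Real.rpow_one]
  have ha' : a ^ α ≠ 0 := (Real.rpow_pos_of_pos ha α).ne'
  have hαα : α * (α - 1) ≠ 0 := by nlinarith
  rw [h1, h2]
  field_simp

lemma expand2 {α a m : ℝ} (hα : 1 < α) (ha : 0 ≤ a) (hm : 0 < m) :
    m * falpha α (a / m) = (a ^ α * m ^ (1 - α) - α * a - (1 - α) * m) / (α * (α - 1)) := by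
  unfold falpha
  have h1 : (a / m) ^ α = a ^ α / m ^ α := Real.div_rpow ha hm.le α
  have h2 : m ^ (1 - α) = m / m ^ α := by rw [Real.rpow_sub hm, Real.rpow_one]
  have hm' : m ^ α ≠ 0 := (Real.rpow_pos_of_pos hm α).ne'
  have hαα : α * (α - 1) ≠ 0 := by nlinarith
  rw [h1, h2]
  field_simp

-- ### pointwise key lemmas

lemma key1_strict {α a b m : ℝ} (hα : 1 < α) (ha : 0 < a) (hb : 0 < b) (hm : 0 ≤ m)
    (hne : m ≠ ((a ^ (1 - α) + b ^ (1 - α)) / 2) ^ (1 / (1 - α))) :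
    a * falpha α ((((a ^ (1 - α) + b ^ (1 - α)) / 2) ^ (1 / (1 - α))) / a)
      + b * falpha α ((((a ^ (1 - α) + b ^ (1 - α)) / 2) ^ (1 / (1 - α))) / b)
      < a * falpha α (m / a) + b * falpha α (m / b) := by
  set c : ℝ := a ^ (1 - α) + b ^ (1 - α) with hc
  have hca : (0:ℝ) < a ^ (1 - α) := Real.rpow_pos_of_pos ha _
  have hcb : (0:ℝ) < b ^ (1 - α) := Real.rpow_pos_of_pos hb _
  have hcpos : 0 < c := by rw [hc]; linarith
  have hc2 : (0:ℝ) < c / 2 := by linarith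
  set s : ℝ := (c / 2) ^ (1 / (1 - α)) with hs
  have hspos : 0 < s := Real.rpow_pos_of_pos hc2 _
  have hkey : c * s ^ (α - 1) = 2 := by
    have h1 : s ^ (α - 1) = (c / 2) ^ ((1 / (1 - α)) * (α - 1)) := by
      rw [hs, ← Real.rpow_mul hc2.le]
    have h2 : (1 / (1 - α)) * (α - 1) = -1 := by
      have : (1:ℝ) - α ≠ 0 := by linarith
      field_simp
      ring
    rw [h1, h2, Real.rpow_neg_one]
    field_simp
  have hbern := bern_pos_strict hα hspos hm hne
  have hmono : c * (s ^ α + α * s ^ (α - 1) * (m - s)) < c * m ^ α :=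
    mul_lt_mul_of_pos_left hbern hcpos
  have hexp : c * (s ^ α + α * s ^ (α - 1) * (m - s)) = c * s ^ α + 2 * α * (m - s) := by
    linear_combination (α * (m - s)) * hkey
  have hcore : c * s ^ α - 2 * α * s < c * m ^ α - 2 * α * m := by linarith
  rw [expand1 hα ha hm, expand1 hα hb hm, expand1 hα ha hspos.le, expand1 hα hb hspos.le,
    ← add_div, ← add_div]
  have hD : (0:ℝ) < α * (α - 1) := by nlinarith
  apply div_lt_div_of_pos_right ?_ hD
  rw [hc] at hcore
  linarith

lemma key1_le {α a b m : ℝ} (hα : 1 < α) (ha : 0 < a) (hb : 0 < b) (hm : 0 ≤ m) :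
    a * falpha α ((((a ^ (1 - α) + b ^ (1 - α)) / 2) ^ (1 / (1 - α))) / a)
      + b * falpha α ((((a ^ (1 - α) + b ^ (1 - α)) / 2) ^ (1 / (1 - α))) / b)
      ≤ a * falpha α (m / a) + b * falpha α (m / b) := by
  rcases eq_or_ne m (((a ^ (1 - α) + b ^ (1 - α)) / 2) ^ (1 / (1 - α))) with rfl | hne
  · exact le_refl _
  · exact (key1_strict hα ha hb hm hne).le

lemma key2_strict {α a b m : ℝ} (hα : 1 < α) (ha : 0 < a) (hb : 0 < b) (hm : 0 < m)
    (hne : m ≠ ((a ^ α + b ^ α) / 2) ^ (1 / α)) :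
    (((a ^ α + b ^ α) / 2) ^ (1 / α)) * falpha α (a / (((a ^ α + b ^ α) / 2) ^ (1 / α)))
      + (((a ^ α + b ^ α) / 2) ^ (1 / α)) * falpha α (b / (((a ^ α + b ^ α) / 2) ^ (1 / α)))
      < m * falpha α (a / m) + m * falpha α (b / m) := by
  set d : ℝ := a ^ α + b ^ α with hd
  have hda : (0:ℝ) < a ^ α := Real.rpow_pos_of_pos ha _
  have hdb : (0:ℝ) < b ^ α := Real.rpow_pos_of_pos hb _
  have hdpos : 0 < d := by rw [hd]; linarith
  have hd2 : (0:ℝ) < d / 2 := by linarith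
  set s : ℝ := (d / 2) ^ (1 / α) with hs
  have hspos : 0 < s := Real.rpow_pos_of_pos hd2 _
  have hq : (1:ℝ) - α < 0 := by linarith
  have hkey : d * s ^ ((1 - α) - 1) = 2 := by
    have h1 : s ^ ((1 - α) - 1) = (d / 2) ^ ((1 / α) * ((1 - α) - 1)) := by
      rw [hs, ← Real.rpow_mul hd2.le]
    have h2 : (1 / α) * ((1 - α) - 1) = -1 := by
      have : α ≠ 0 := by linarith
      field_simp
      ring
    rw [h1, h2, Real.rpow_neg_one]
    field_simp
  have hbern := bern_neg_strict hq hspos hm hne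
  have hmono : d * (s ^ (1 - α) + (1 - α) * s ^ ((1 - α) - 1) * (m - s)) < d * m ^ (1 - α) :=
    mul_lt_mul_of_pos_left hbern hdpos
  have hexp : d * (s ^ (1 - α) + (1 - α) * s ^ ((1 - α) - 1) * (m - s))
      = d * s ^ (1 - α) + 2 * (1 - α) * (m - s) := by
    linear_combination ((1 - α) * (m - s)) * hkey
  have hcore : d * s ^ (1 - α) - (1 - α) * 2 * s < d * m ^ (1 - α) - (1 - α) * 2 * m := by
    linarith
  rw [expand2 hα ha.le hm, expand2 hα hb.le hm, expand2 hα ha.le hspos, expand2 hα hb.le hspos,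
    ← add_div, ← add_div]
  have hD : (0:ℝ) < α * (α - 1) := by nlinarith
  apply div_lt_div_of_pos_right ?_ hD
  rw [hd] at hcore
  linarith

lemma key2_le {α a b m : ℝ} (hα : 1 < α) (ha : 0 < a) (hb : 0 < b) (hm : 0 < m) :
    (((a ^ α + b ^ α) / 2) ^ (1 / α)) * falpha α (a / (((a ^ α + b ^ α) / 2) ^ (1 / α)))
      + (((a ^ α + b ^ α) / 2) ^ (1 / α)) * falpha α (b / (((a ^ α + b ^ α) / 2) ^ (1 / α)))
      ≤ m * falpha α (a / m) + m * falpha α (b / m) := by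
  rcases eq_or_ne m (((a ^ α + b ^ α) / 2) ^ (1 / α)) with rfl | hne
  · exact le_refl _
  · exact (key2_strict hα ha hb hm hne).le


-- ### nonnegativity of the divergence

lemma df_falpha_nonneg {α : ℝ} (hα : 1 < α) {π : X → ℝ} (hπ : ∀ x, 0 < π x)
    {M L : X → X → ℝ} (hM : ∀ x y, x ≠ y → 0 ≤ M x y) (hL : ∀ x y, x ≠ y → 0 ≤ L x y) :
    0 ≤ Df (falpha α) π M L := by
  apply Finset.sum_nonneg; intro x _
  apply mul_nonneg (hπ x).le
  apply Finset.sum_nonneg; intro y hy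
  have hxy : x ≠ y := ((Finset.mem_erase.1 hy).1).symm
  exact mul_nonneg (hL x y hxy) (falpha_nonneg hα (div_nonneg (hM x y hxy) (hL x y hxy)))

-- ### transfer from Df to Renyi

lemma renyi_le_iff {α : ℝ} (hα : 1 < α) {π : X → ℝ} {M M' L L' : X → X → ℝ}
    (h1 : 0 ≤ Df (falpha α) π M L) (h2 : 0 ≤ Df (falpha α) π M' L') :
    Renyi α π M L ≤ Renyi α π M' L' ↔ Df (falpha α) π M L ≤ Df (falpha α) π M' L' := by
  have hk : 0 < α * (α - 1) := by nlinarith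
  have hp1 : 0 < 1 + α * (α - 1) * Df (falpha α) π M L := by nlinarith
  have hp2 : 0 < 1 + α * (α - 1) * Df (falpha α) π M' L' := by nlinarith
  unfold Renyi
  have hd : (0:ℝ) < 1 / (α - 1) := by
    have h : (0:ℝ) < α - 1 := by linarith
    positivity
  rw [mul_le_mul_iff_right₀ hd, Real.log_le_log_iff hp1 hp2]
  constructor <;> intro h <;> nlinarith

lemma renyi_eq_iff {α : ℝ} (hα : 1 < α) {π : X → ℝ} {M M' L L' : X → X → ℝ}
    (h1 : 0 ≤ Df (falpha α) π M L) (h2 : 0 ≤ Df (falpha α) π M' L') :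
    Renyi α π M L = Renyi α π M' L' ↔ Df (falpha α) π M L = Df (falpha α) π M' L' := by
  rw [le_antisymm_iff, le_antisymm_iff, renyi_le_iff hα h1 h2, renyi_le_iff hα h2 h1]

-- ### doubling identities

lemma doubling1 {α : ℝ} {π : X → ℝ} (hπ : ∀ x, 0 < π x) {L : X → X → ℝ}
    (hLpos : ∀ x y, x ≠ y → 0 < L x y) {N : X → X → ℝ}
    (hN : ∀ x y, π x * N x y = π y * N y x) :
    oS (fun x y => π x * (L x y * falpha α (N x y / L x y)
      + dual π L x y * falpha α (N x y / dual π L x y)))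
      = 2 * Df (falpha α) π N L := by
  have e : oS (fun x y => π x * (L x y * falpha α (N x y / L x y)
      + dual π L x y * falpha α (N x y / dual π L x y)))
      = oS (fun x y => π x * (L x y * falpha α (N x y / L x y))
        + π x * (dual π L x y * falpha α (N x y / dual π L x y))) :=
    oS_congr fun x y _ => mul_add _ _ _
  rw [e, oS_add, ← Df_eq_oS, ← sym1 hπ hLpos hN]
  ring

lemma doubling2 {α : ℝ} {π : X → ℝ} (hπ : ∀ x, 0 < π x) {L : X → X → ℝ}
    (hLpos : ∀ x y, x ≠ y → 0 < L x y) {N : X → X → ℝ}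
    (hN : ∀ x y, π x * N x y = π y * N y x) :
    oS (fun x y => π x * (N x y * falpha α (L x y / N x y)
      + N x y * falpha α (dual π L x y / N x y)))
      = 2 * Df (falpha α) π L N := by
  have e : oS (fun x y => π x * (N x y * falpha α (L x y / N x y)
      + N x y * falpha α (dual π L x y / N x y)))
      = oS (fun x y => π x * (N x y * falpha α (L x y / N x y))
        + π x * (N x y * falpha α (dual π L x y / N x y))) :=
    oS_congr fun x y _ => mul_add _ _ _
  rw [e, oS_add, ← Df_eq_oS, ← sym2 hπ hLpos hN]
  ring


-- ### projection at the Df level, part 1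

lemma proj1 {α : ℝ} (hα : 1 < α) {π : X → ℝ} (hπ : ∀ x, 0 < π x)
    {L : X → X → ℝ} (hLpos : ∀ x y, x ≠ y → 0 < L x y)
    {M : X → X → ℝ} (hM : IsRev π M) :
    Df (falpha α) π (pmean (1 - α) π L) L ≤ Df (falpha α) π M L ∧
      (Df (falpha α) π M L = Df (falpha α) π (pmean (1 - α) π L) L →
        M = pmean (1 - α) π L) := by
  have hp0 : (1 : ℝ) - α ≠ 0 := by
    intro h; linarith [h]
  set P := pmean (1 - α) π L with hP
  have hrevP : IsRev π P := pmean_rev hπ hLpos hp0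
  set T : (X → X → ℝ) → X → X → ℝ := fun N x y =>
    π x * (L x y * falpha α (N x y / L x y)
      + dual π L x y * falpha α (N x y / dual π L x y)) with hT
  have hPxy : ∀ x y, x ≠ y →
      P x y = ((L x y ^ (1 - α) + dual π L x y ^ (1 - α)) / 2) ^ (1 / (1 - α)) :=
    fun x y hxy => pmean_off hxy (hLpos x y hxy) (dual_pos hπ hLpos hxy)
  have hterm : ∀ x y, x ≠ y → T P x y ≤ T M x y := by
    intro x y hxy
    simp only [hT]
    rw [hPxy x y hxy]
    exact mul_le_mul_of_nonneg_left
      (key1_le hα (hLpos x y hxy) (dual_pos hπ hLpos hxy) (hM.1.1 x y hxy)) (hπ x).le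
  have hterm_strict : ∀ x y, x ≠ y → M x y ≠ P x y → T P x y < T M x y := by
    intro x y hxy hne
    rw [hPxy x y hxy] at hne
    simp only [hT]
    rw [hPxy x y hxy]
    exact mul_lt_mul_of_pos_left
      (key1_strict hα (hLpos x y hxy) (dual_pos hπ hLpos hxy) (hM.1.1 x y hxy) hne) (hπ x)
  have hsum : oS (T P) ≤ oS (T M) := by
    unfold oS
    exact Finset.sum_le_sum fun x _ => Finset.sum_le_sum fun y hy =>
      hterm x y (((Finset.mem_erase.1 hy).1).symm)
  have hd1 : oS (T P) = 2 * Df (falpha α) π P L := doubling1 hπ hLpos hrevP.2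
  have hd2 : oS (T M) = 2 * Df (falpha α) π M L := doubling1 hπ hLpos hM.2
  constructor
  · rw [hd1, hd2] at hsum; linarith
  · intro heq
    have hsum_eq : oS (T P) = oS (T M) := by rw [hd1, hd2, heq]
    unfold oS at hsum_eq
    have houter := (Finset.sum_eq_sum_iff_of_le (fun x _ =>
      Finset.sum_le_sum fun y hy => hterm x y (((Finset.mem_erase.1 hy).1).symm))).mp hsum_eq
    have hinner : ∀ x y, x ≠ y → T P x y = T M x y := by
      intro x y hxy
      have h := (Finset.sum_eq_sum_iff_of_le (fun y hy =>
        hterm x y (((Finset.mem_erase.1 hy).1).symm))).mp (houter x (Finset.mem_univ x))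
      exact h y (Finset.mem_erase.2 ⟨hxy.symm, Finset.mem_univ y⟩)
    have hoff : ∀ x y, x ≠ y → M x y = P x y := by
      intro x y hxy
      by_contra hne
      exact absurd (hinner x y hxy) (ne_of_lt (hterm_strict x y hxy hne))
    funext x y
    rcases eq_or_ne x y with rfl | hxy
    · rw [gen_diag hM.1.2 x, gen_diag hrevP.1.2 x]
      congr 1
      exact Finset.sum_congr rfl fun z hz => hoff x z (((Finset.mem_erase.1 hz).1).symm)
    · exact hoff x y hxy

-- ### projection at the Df level, part 2

lemma proj2 {α : ℝ} (hα : 1 < α) {π : X → ℝ} (hπ : ∀ x, 0 < π x)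
    {L : X → X → ℝ} (hLpos : ∀ x y, x ≠ y → 0 < L x y)
    {M : X → X → ℝ} (hM : IsRev π M) (hMpos : ∀ x y, x ≠ y → 0 < M x y) :
    Df (falpha α) π L (pmean α π L) ≤ Df (falpha α) π L M ∧
      (Df (falpha α) π L M = Df (falpha α) π L (pmean α π L) → M = pmean α π L) := by
  have hp0 : α ≠ 0 := by intro h; linarith [h]
  set P := pmean α π L with hP
  have hrevP : IsRev π P := pmean_rev hπ hLpos hp0
  set T : (X → X → ℝ) → X → X → ℝ := fun N x y =>
    π x * (N x y * falpha α (L x y / N x y)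
      + N x y * falpha α (dual π L x y / N x y)) with hT
  have hPxy : ∀ x y, x ≠ y →
      P x y = ((L x y ^ α + dual π L x y ^ α) / 2) ^ (1 / α) :=
    fun x y hxy => pmean_off hxy (hLpos x y hxy) (dual_pos hπ hLpos hxy)
  have hterm : ∀ x y, x ≠ y → T P x y ≤ T M x y := by
    intro x y hxy
    simp only [hT]
    rw [hPxy x y hxy]
    exact mul_le_mul_of_nonneg_left
      (key2_le hα (hLpos x y hxy) (dual_pos hπ hLpos hxy) (hMpos x y hxy)) (hπ x).le
  have hterm_strict : ∀ x y, x ≠ y → M x y ≠ P x y → T P x y < T M x y := by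
    intro x y hxy hne
    rw [hPxy x y hxy] at hne
    simp only [hT]
    rw [hPxy x y hxy]
    exact mul_lt_mul_of_pos_left
      (key2_strict hα (hLpos x y hxy) (dual_pos hπ hLpos hxy) (hMpos x y hxy) hne) (hπ x)
  have hsum : oS (T P) ≤ oS (T M) := by
    unfold oS
    exact Finset.sum_le_sum fun x _ => Finset.sum_le_sum fun y hy =>
      hterm x y (((Finset.mem_erase.1 hy).1).symm)
  have hd1 : oS (T P) = 2 * Df (falpha α) π L P := doubling2 hπ hLpos hrevP.2
  have hd2 : oS (T M) = 2 * Df (falpha α) π L M := doubling2 hπ hLpos hM.2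
  constructor
  · rw [hd1, hd2] at hsum; linarith
  · intro heq
    have hsum_eq : oS (T P) = oS (T M) := by rw [hd1, hd2, heq]
    unfold oS at hsum_eq
    have houter := (Finset.sum_eq_sum_iff_of_le (fun x _ =>
      Finset.sum_le_sum fun y hy => hterm x y (((Finset.mem_erase.1 hy).1).symm))).mp hsum_eq
    have hinner : ∀ x y, x ≠ y → T P x y = T M x y := by
      intro x y hxy
      have h := (Finset.sum_eq_sum_iff_of_le (fun y hy =>
        hterm x y (((Finset.mem_erase.1 hy).1).symm))).mp (houter x (Finset.mem_univ x))
      exact h y (Finset.mem_erase.2 ⟨hxy.symm, Finset.mem_univ y⟩)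
    have hoff : ∀ x y, x ≠ y → M x y = P x y := by
      intro x y hxy
      by_contra hne
      exact absurd (hinner x y hxy) (ne_of_lt (hterm_strict x y hxy hne))
    funext x y
    rcases eq_or_ne x y with rfl | hxy
    · rw [gen_diag hM.1.2 x, gen_diag hrevP.1.2 x]
      congr 1
      exact Finset.sum_congr rfl fun z hz => hoff x z (((Finset.mem_erase.1 hz).1).symm)
    · exact hoff x y hxy



/-- **Projections under the Rényi divergence** (Theorem 3.10(1),(2)):
for `α > 1` and `L ∈ ℒ⁺`, the map `ℒ(π) ∋ M ↦ R_α(M‖L)` attains a unique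
minimum at `P_{1−α}(L)`, and the map `ℒ⁺(π) ∋ M ↦ R_α(L‖M)` attains a unique
minimum at `P_α(L)`. -/
theorem renyi_projections (π : X → ℝ) (hπ : IsProb π)
    (α : ℝ) (hα : 1 < α)
    (L : X → X → ℝ) (hL : IsGen L) (hLpos : ∀ x y, x ≠ y → 0 < L x y) :
    (IsRev π (pmean (1 - α) π L) ∧
      (∀ M, IsRev π M → Renyi α π (pmean (1 - α) π L) L ≤ Renyi α π M L) ∧
      (∀ M, IsRev π M →
        (Renyi α π M L = Renyi α π (pmean (1 - α) π L) L ↔ M = pmean (1 - α) π L))) ∧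
    ((IsRev π (pmean α π L) ∧ ∀ x y, x ≠ y → 0 < pmean α π L x y) ∧
      (∀ M, IsRev π M → (∀ x y, x ≠ y → 0 < M x y) →
        Renyi α π L (pmean α π L) ≤ Renyi α π L M) ∧
      (∀ M, IsRev π M → (∀ x y, x ≠ y → 0 < M x y) →
        (Renyi α π L M = Renyi α π L (pmean α π L) ↔ M = pmean α π L))) := by
  obtain ⟨hπpos, -⟩ := hπ
  have hLnn : ∀ x y, x ≠ y → 0 ≤ L x y := fun x y h => (hLpos x y h).le
  have hp1 : (1 : ℝ) - α ≠ 0 := by intro h; linarith [h]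
  have hrev1 : IsRev π (pmean (1 - α) π L) := pmean_rev hπpos hLpos hp1
  have hrev2 : IsRev π (pmean α π L) :=
    pmean_rev hπpos hLpos (by intro h; linarith [h])
  have hP1nn : ∀ x y, x ≠ y → 0 ≤ pmean (1 - α) π L x y := hrev1.1.1
  have hP2pos : ∀ x y, x ≠ y → 0 < pmean α π L x y :=
    fun x y h => pmean_off_pos hπpos hLpos h
  have hDP1 : 0 ≤ Df (falpha α) π (pmean (1 - α) π L) L :=
    df_falpha_nonneg hα hπpos hP1nn hLnn
  have hDP2 : 0 ≤ Df (falpha α) π L (pmean α π L) :=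
    df_falpha_nonneg hα hπpos hLnn (fun x y h => (hP2pos x y h).le)
  refine ⟨⟨hrev1, ?_, ?_⟩, ⟨⟨hrev2, hP2pos⟩, ?_, ?_⟩⟩
  · intro M hM
    exact (renyi_le_iff hα hDP1 (df_falpha_nonneg hα hπpos hM.1.1 hLnn)).mpr
      (proj1 hα hπpos hLpos hM).1
  · intro M hM
    constructor
    · intro h
      exact (proj1 hα hπpos hLpos hM).2
        ((renyi_eq_iff hα (df_falpha_nonneg hα hπpos hM.1.1 hLnn) hDP1).mp h)
    · rintro rfl; rfl
  · intro M hM hMpos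
    exact (renyi_le_iff hα hDP2
      (df_falpha_nonneg hα hπpos hLnn (fun x y h => (hMpos x y h).le))).mpr
      (proj2 hα hπpos hLpos hM hMpos).1
  · intro M hM hMpos
    constructor
    · intro h
      exact (proj2 hα hπpos hLpos hM hMpos).2
        ((renyi_eq_iff hα
          (df_falpha_nonneg hα hπpos hLnn (fun x y hh => (hMpos x y hh).le)) hDP2).mp h)
    · rintro rfl; rfl


end
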